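/- arXiv:2601.19809 — 4 statements merged into one kernel-verified Lean document; each statement's English description precedes it below -/
import Mathlib

section
/- Semantic invariance: Let P be a special product rule. For all terms u, v ∈ Terms(X), if u ≈ v then for every P-automaton 𝒜 over variables X we have ⟦u⟧_𝒜 = ⟦v⟧_𝒜. -/
/-!
Send terms to the free commutative `ℚ`-algebra `ℚ[X]`; `≈`-equivalent terms have the same
image. For a special `P`, pairs `(a, ȧ)` with product `(a, ȧ)(b, ḃ) = (ab, P(a, ȧ, b, ḃ))` form a
non-unital commutative `ℚ`-algebra, and evaluating a term `u` at the pairs `(x, Δx)` gives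
`(u, Δ̃u)`. After adjoining a unit this evaluation factors through `ℚ[X]`, so the image of `Δ̃u`
depends only on the image of `u`. Along every word, equivalent terms therefore keep equal images,
and the output `F(Δ̃_w u)` is the evaluation at `F` of that image.
-/

namespace PSeries

/-- A (formal power) series over alphabet `A` with rational coefficients. -/
abbrev Series (A : Type) : Type := List A → ℚ

/-- Left derivative of a series by a letter. -/
def deriv {A : Type} (a : A) (f : Series A) : Series A := fun w => f (a :: w)

/-- Right derivative of a series by a letter. -/
def derivR {A : Type} (b : A) (f : Series A) : Series A := fun w => f (w ++ [b])

/-- Reversal of a series. -/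
def rev {A : Type} (f : Series A) : Series A := fun w => f w.reverse

/-- Terms over a set of variables `X`:  `u ::= x | 0 | c·u | u + v | u * v`. -/
inductive Term (X : Type) : Type
  | var : X → Term X
  | zero : Term X
  | smul : ℚ → Term X → Term X
  | add : Term X → Term X → Term X
  | mul : Term X → Term X → Term X

namespace Term

/-- Simultaneous substitution of terms for variables. -/
def subst {X Y : Type} : Term X → (X → Term Y) → Term Y
  | var x, ρ => ρ x
  | zero, _ => zero
  | smul c u, ρ => smul c (u.subst ρ)
  | add u v, ρ => add (u.subst ρ) (v.subst ρ)
  | mul u v, ρ => mul (u.subst ρ) (v.subst ρ)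

/-- Semantics of a term on series, with the product symbol interpreted by `m`. -/
def evalS {A X : Type} (m : Series A → Series A → Series A) :
    Term X → (X → Series A) → Series A
  | var x, ρ => ρ x
  | zero, _ => 0
  | smul c u, ρ => c • u.evalS m ρ
  | add u v, ρ => u.evalS m ρ + v.evalS m ρ
  | mul u v, ρ => m (u.evalS m ρ) (v.evalS m ρ)

/-- Evaluation of a term in the rationals (product is rational multiplication). -/
def evalQ {X : Type} : Term X → (X → ℚ) → ℚ
  | var x, F => F x
  | zero, _ => 0
  | smul c u, F => c * u.evalQ F
  | add u v, F => u.evalQ F + v.evalQ F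
  | mul u v, F => u.evalQ F * v.evalQ F

/-- Evaluation of a term in a commutative `ℚ`-algebra. -/
def evalA {R : Type} [CommRing R] [Algebra ℚ R] {X : Type} :
    Term X → (X → R) → R
  | var x, ρ => ρ x
  | zero, _ => 0
  | smul c u, ρ => c • u.evalA ρ
  | add u v, ρ => u.evalA ρ + v.evalA ρ
  | mul u v, ρ => u.evalA ρ * v.evalA ρ

end Term

/-- `m` is the `P`-product for the product rule `P`; that is, `m` satisfies the
two defining equations `(f*g)(ε) = f(ε)·g(ε)` and `δ_a (f*g) = P(f, δ_a f, g, δ_a g)`. -/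
def IsPProduct {A : Type} (P : Term (Fin 4)) (m : Series A → Series A → Series A) : Prop :=
  (∀ f g : Series A, m f g [] = f [] * g []) ∧
  (∀ (f g : Series A) (a : A),
    deriv a (m f g) = P.evalS m ![f, deriv a f, g, deriv a g])

/-- The smallest congruence on terms generated by the axioms of
commutative (not necessarily unital) `ℚ`-algebras. -/
inductive TEq {X : Type} : Term X → Term X → Prop
  | refl (u : Term X) : TEq u u
  | symm {u v : Term X} : TEq u v → TEq v u
  | trans {u v w : Term X} : TEq u v → TEq v w → TEq u w
  | smul_congr (c : ℚ) {u v : Term X} : TEq u v → TEq (.smul c u) (.smul c v)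
  | add_congr {u u' v v' : Term X} : TEq u u' → TEq v v' → TEq (.add u v) (.add u' v')
  | mul_congr {u u' v v' : Term X} : TEq u u' → TEq v v' → TEq (.mul u v) (.mul u' v')
  | one_smul (u : Term X) : TEq (.smul 1 u) u
  | smul_smul (c d : ℚ) (u : Term X) : TEq (.smul c (.smul d u)) (.smul (c * d) u)
  | add_smul (c d : ℚ) (u : Term X) : TEq (.smul (c + d) u) (.add (.smul c u) (.smul d u))
  | smul_add (c : ℚ) (u v : Term X) : TEq (.smul c (.add u v)) (.add (.smul c u) (.smul c v))
  | add_zero (u : Term X) : TEq (.add u .zero) u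
  | add_assoc (u v w : Term X) : TEq (.add (.add u v) w) (.add u (.add v w))
  | add_comm (u v : Term X) : TEq (.add u v) (.add v u)
  | neg_cancel (u : Term X) : TEq (.add u (.smul (-1) u)) .zero
  | mul_addl (u v w : Term X) : TEq (.mul (.add u v) w) (.add (.mul u w) (.mul v w))
  | mul_smull (c : ℚ) (u v : Term X) : TEq (.mul (.smul c u) v) (.smul c (.mul u v))
  | mul_assoc (u v w : Term X) : TEq (.mul (.mul u v) w) (.mul u (.mul v w))
  | mul_comm (u v : Term X) : TEq (.mul u v) (.mul v u)

/-- A product rule `P` (a term over the variables `x = 0, ẋ = 1, y = 2, ẏ = 3`)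
is special: it satisfies (P-add), (P-assoc) and (P-comm) up to the congruence `TEq`.
In the first two equations the six variables are `x = 0, ẋ = 1, y = 2, ẏ = 3, z = 4, ż = 5`. -/
def Special (P : Term (Fin 4)) : Prop :=
  TEq (P.subst (![.add (.var 0) (.var 2), .add (.var 1) (.var 3), .var 4, .var 5] :
        Fin 4 → Term (Fin 6)))
      (.add (P.subst (![.var 0, .var 1, .var 4, .var 5] : Fin 4 → Term (Fin 6)))
            (P.subst (![.var 2, .var 3, .var 4, .var 5] : Fin 4 → Term (Fin 6)))) ∧
  TEq (P.subst (![.var 0, .var 1, .mul (.var 2) (.var 4),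
        P.subst (![.var 2, .var 3, .var 4, .var 5] : Fin 4 → Term (Fin 6))] :
        Fin 4 → Term (Fin 6)))
      (P.subst (![.mul (.var 0) (.var 2),
        P.subst (![.var 0, .var 1, .var 2, .var 3] : Fin 4 → Term (Fin 6)), .var 4, .var 5] :
        Fin 4 → Term (Fin 6))) ∧
  TEq P (P.subst (![.var 2, .var 3, .var 0, .var 1] : Fin 4 → Term (Fin 4)))

/-- A binary operation on series is bilinear, associative and commutative. -/
def IsBAC {A : Type} (m : Series A → Series A → Series A) : Prop :=
  (∀ f g h : Series A, m (f + g) h = m f h + m g h) ∧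
  (∀ (c : ℚ) (f g : Series A), m (c • f) g = c • m f g) ∧
  (∀ f g h : Series A, m f (g + h) = m f g + m f h) ∧
  (∀ (c : ℚ) (f g : Series A), m f (c • g) = c • m f g) ∧
  (∀ f g h : Series A, m (m f g) h = m f (m g h)) ∧
  (∀ f g : Series A, m f g = m g f)

/-- The smallest set of series containing `0` and the generators `G`, closed under
scalar multiplication, addition, and the product `m`. -/
inductive InAlg {A : Type} (m : Series A → Series A → Series A) (G : Set (Series A)) :
    Series A → Prop
  | zero : InAlg m G 0
  | gen {g : Series A} : g ∈ G → InAlg m G g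
  | smul (c : ℚ) {f : Series A} : InAlg m G f → InAlg m G (c • f)
  | add {f g : Series A} : InAlg m G f → InAlg m G g → InAlg m G (f + g)
  | mul {f g : Series A} : InAlg m G f → InAlg m G g → InAlg m G (m f g)

/-- `f` is `P`-finite (w.r.t. the `P`-product `m`): there are finitely many generators
`g 0 = f, g 1, …` all of whose left derivatives lie in the algebra they generate. -/
def PFinite {A : Type} (m : Series A → Series A → Series A) (f : Series A) : Prop :=
  ∃ (k : ℕ) (g : Fin (k + 1) → Series A),
    g 0 = f ∧ ∀ (i : Fin (k + 1)) (a : A), InAlg m (Set.range g) (deriv a (g i))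

/-- A `P`-automaton: output function `out` and transition function `tr`. -/
structure PAutomaton (A X : Type) where
  out : X → ℚ
  tr : A → X → Term X

/-- The `P`-extension of a function `D : X → Term X` to all terms. -/
def pext {X : Type} (P : Term (Fin 4)) (D : X → Term X) : Term X → Term X
  | .var x => D x
  | .zero => .zero
  | .smul c u => .smul c (pext P D u)
  | .add u v => .add (pext P D u) (pext P D v)
  | .mul u v => P.subst ![u, pext P D u, v, pext P D v]

/-- Homomorphic extension of the output function of a `P`-automaton to all terms. -/
def PAutomaton.outT {A X : Type} (𝒜 : PAutomaton A X) (u : Term X) : ℚ :=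
  u.evalQ 𝒜.out

/-- Extension of the (`P`-extended) transition function of a `P`-automaton to words. -/
def trWord {A X : Type} (P : Term (Fin 4)) (𝒜 : PAutomaton A X) :
    List A → Term X → Term X
  | [], u => u
  | a :: w, u => trWord P 𝒜 w (pext P (𝒜.tr a) u)

/-- The semantics of a `P`-automaton: the unique map with `⟦α⟧(ε) = F(α)` and
`δ_a ⟦α⟧ = ⟦Δ̃_a α⟧`; concretely, `⟦α⟧(w) = F(Δ̃_w α)`. -/
def asem {A X : Type} (P : Term (Fin 4)) (𝒜 : PAutomaton A X) (u : Term X) : Series A :=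
  fun w => (trWord P 𝒜 w u).evalQ 𝒜.out

/-- `ℚ[X]⁰`: polynomials in commuting variables `X` with zero constant term. -/
noncomputable def Aug (X : Type) : Submodule ℚ (MvPolynomial X ℚ) where
  carrier := {p | MvPolynomial.coeff 0 p = 0}
  add_mem' := by
    intro a b ha hb
    simp only [Set.mem_setOf_eq, MvPolynomial.coeff_add] at *
    rw [ha, hb, add_zero]
  zero_mem' := by simp
  smul_mem' := by
    intro c p hp
    simp only [Set.mem_setOf_eq, MvPolynomial.coeff_smul] at *
    rw [hp, smul_zero]

/-- The variable `x` as an element of `ℚ[X]⁰`. -/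
noncomputable def Aug.var {X : Type} (x : X) : Aug X :=
  ⟨MvPolynomial.X x, by
    show MvPolynomial.coeff 0 (MvPolynomial.X x) = 0
    simp [MvPolynomial.coeff_X']⟩

/-- The product of two elements of `ℚ[X]⁰`, again in `ℚ[X]⁰`. -/
noncomputable def Aug.mul {X : Type} (p q : Aug X) : Aug X :=
  ⟨(p : MvPolynomial X ℚ) * (q : MvPolynomial X ℚ), by
    show MvPolynomial.coeff 0 _ = 0
    have hp : MvPolynomial.constantCoeff (p : MvPolynomial X ℚ) = 0 := p.2
    have hq : MvPolynomial.constantCoeff (q : MvPolynomial X ℚ) = 0 := q.2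
    have := map_mul MvPolynomial.constantCoeff (p : MvPolynomial X ℚ) (q : MvPolynomial X ℚ)
    simpa [MvPolynomial.constantCoeff_eq, hp, hq] using this⟩

/-- A polynomial `P`-automaton over variables `X`. -/
structure PolyAutomaton (A X : Type) where
  out : X → ℚ
  tr : A → X → Aug X

/-- Extension to words of a family of (extended) transition maps on `ℚ[X]⁰`. -/
noncomputable def trWordP {A X : Type} (Dt : A → (Aug X →ₗ[ℚ] Aug X)) : List A → Aug X → Aug X
  | [], p => p
  | a :: w, p => trWordP Dt w (Dt a p)

/-- The ideal of `ℚ[X]` generated by all polynomials reachable from the initial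
variable `x1` by words of length at most `n`. -/
noncomputable def reachIdeal {A X : Type} (Dt : A → (Aug X →ₗ[ℚ] Aug X)) (x1 : X) (n : ℕ) :
    Ideal (MvPolynomial X ℚ) :=
  Ideal.span {p : MvPolynomial X ℚ |
    ∃ w : List A, w.length ≤ n ∧ p = ((trWordP Dt w (Aug.var x1) : Aug X) : MvPolynomial X ℚ)}


namespace Term

variable {X : Type}

theorem evalA_subst {R : Type} [CommRing R] [Algebra ℚ R] {Y : Type}
    (u : Term X) (ρ : X → Term Y) (σ : Y → R) :
    (u.subst ρ).evalA σ = u.evalA fun x => (ρ x).evalA σ := by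
  induction u <;> simp_all [subst, evalA]

theorem evalQ_eq_evalA (u : Term X) (F : X → ℚ) : u.evalQ F = u.evalA F := by
  induction u <;> simp_all [evalQ, evalA]

noncomputable def toMvPolynomial (u : Term X) : MvPolynomial X ℚ :=
  u.evalA MvPolynomial.X

theorem aeval_toMvPolynomial {R : Type} [CommRing R] [Algebra ℚ R] (u : Term X) (ρ : X → R) :
    MvPolynomial.aeval ρ u.toMvPolynomial = u.evalA ρ := by
  induction u <;> simp_all [toMvPolynomial, evalA]

end Term

theorem TEq.evalA_eq {R : Type} [CommRing R] [Algebra ℚ R] {X : Type}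
    {u v : Term X} (h : TEq u v) (ρ : X → R) : u.evalA ρ = v.evalA ρ := by
  induction h with
  | refl => rfl
  | symm _ ih => exact ih.symm
  | trans _ _ ih₁ ih₂ => exact ih₁.trans ih₂
  | _ => simp_all [Term.evalA, _root_.smul_smul, _root_.add_smul, _root_.smul_add,
      _root_.add_assoc, _root_.add_comm, add_mul, _root_.mul_assoc, _root_.mul_comm]

theorem TEq.toMvPolynomial_eq {X : Type} {u v : Term X} (h : TEq u v) :
    u.toMvPolynomial = v.toMvPolynomial :=
  h.evalA_eq MvPolynomial.X

section ProductRule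

variable {R : Type} [CommRing R] [Algebra ℚ R] {P : Term (Fin 4)}

def evalRule (P : Term (Fin 4)) (a a' b b' : R) : R :=
  P.evalA ![a, a', b, b']

theorem evalA_subst_eq_evalRule {Y : Type} (P : Term (Fin 4)) (t₀ t₁ t₂ t₃ : Term Y)
    (σ : Y → R) :
    (P.subst ![t₀, t₁, t₂, t₃]).evalA σ =
      evalRule P (t₀.evalA σ) (t₁.evalA σ) (t₂.evalA σ) (t₃.evalA σ) := by
  rw [Term.evalA_subst, evalRule]
  congr 1
  funext i
  fin_cases i <;> rfl

theorem evalRule_add_left (hP : Special P) (a a' b b' c c' : R) :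
    evalRule P (a + b) (a' + b') c c' = evalRule P a a' c c' + evalRule P b b' c c' := by
  simpa [evalA_subst_eq_evalRule, Term.evalA] using hP.1.evalA_eq ![a, a', b, b', c, c']

theorem evalRule_assoc (hP : Special P) (a a' b b' c c' : R) :
    evalRule P a a' (b * c) (evalRule P b b' c c') =
      evalRule P (a * b) (evalRule P a a' b b') c c' := by
  simpa [evalA_subst_eq_evalRule, Term.evalA] using hP.2.1.evalA_eq ![a, a', b, b', c, c']

theorem evalRule_comm (hP : Special P) (a a' b b' : R) :
    evalRule P a a' b b' = evalRule P b b' a a' := by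
  have h := hP.2.2.evalA_eq ![a, a', b, b']
  simp only [evalA_subst_eq_evalRule, Term.evalA] at h
  exact h

theorem evalRule_zero_left (hP : Special P) (c c' : R) : evalRule P 0 0 c c' = 0 := by
  simpa using evalRule_add_left hP (0 : R) 0 0 0 c c'

theorem evalRule_smul_left (hP : Special P) (q : ℚ) (a a' c c' : R) :
    evalRule P (q • a) (q • a') c c' = q • evalRule P a a' c c' :=
  map_rat_smul (AddMonoidHom.mk' (fun x : R × R => evalRule P x.1 x.2 c c')
    fun x y => evalRule_add_left hP x.1 x.2 y.1 y.2 c c') q (a, a')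

theorem evalRule_add_right (hP : Special P) (a a' b b' c c' : R) :
    evalRule P a a' (b + c) (b' + c') = evalRule P a a' b b' + evalRule P a a' c c' := by
  simp only [evalRule_comm hP a a', evalRule_add_left hP]

theorem evalRule_zero_right (hP : Special P) (a a' : R) : evalRule P a a' 0 0 = 0 := by
  rw [evalRule_comm hP, evalRule_zero_left hP]

theorem evalRule_smul_right (hP : Special P) (q : ℚ) (a a' b b' : R) :
    evalRule P a a' (q • b) (q • b') = q • evalRule P a a' b b' := by
  rw [evalRule_comm hP, evalRule_smul_left hP, evalRule_comm hP]

end ProductRule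

/-- Pairs `(a, ȧ)` of a value and its derivative; `P` is a phantom index selecting the product
rule by which they are multiplied. -/
def Jet (_P : Term (Fin 4)) (R : Type) : Type := R × R

namespace Jet

variable {P : Term (Fin 4)} {R : Type}

def mk (a a' : R) : Jet P R := (a, a')

variable [CommRing R] [Algebra ℚ R]

instance : AddCommGroup (Jet P R) := inferInstanceAs (AddCommGroup (R × R))

instance : Module ℚ (Jet P R) := inferInstanceAs (Module ℚ (R × R))

instance : Mul (Jet P R) := ⟨fun x y => (x.1 * y.1, evalRule P x.1 x.2 y.1 y.2)⟩

variable [hP : Fact (Special P)]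

instance : NonUnitalCommRing (Jet P R) where
  left_distrib _ _ _ := Prod.ext (mul_add ..) (evalRule_add_right hP.out ..)
  right_distrib _ _ _ := Prod.ext (add_mul ..) (evalRule_add_left hP.out ..)
  zero_mul _ := Prod.ext (zero_mul _) (evalRule_zero_left hP.out ..)
  mul_zero _ := Prod.ext (mul_zero _) (evalRule_zero_right hP.out ..)
  mul_assoc _ _ _ := Prod.ext (mul_assoc ..) (evalRule_assoc hP.out ..).symm
  mul_comm _ _ := Prod.ext (mul_comm ..) (evalRule_comm hP.out ..)

instance : IsScalarTower ℚ (Jet P R) (Jet P R) :=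
  ⟨fun _ _ _ => Prod.ext (smul_mul_assoc ..) (evalRule_smul_left hP.out ..)⟩

instance : SMulCommClass ℚ (Jet P R) (Jet P R) :=
  ⟨fun _ _ _ => Prod.ext (mul_smul_comm ..).symm (evalRule_smul_right hP.out ..).symm⟩

end Jet

section Extension

variable {X : Type} {P : Term (Fin 4)} [Fact (Special P)]

theorem evalA_jet (D : X → Term X) (u : Term X) :
    u.evalA (fun x => (Jet.mk (P := P) (MvPolynomial.X x) (D x).toMvPolynomial :
        Unitization ℚ (Jet P (MvPolynomial X ℚ)))) =
      (Jet.mk (P := P) u.toMvPolynomial (pext P D u).toMvPolynomial :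
        Unitization ℚ (Jet P (MvPolynomial X ℚ))) := by
  induction u with
  | var x => rfl
  | zero => exact (Unitization.inr_zero ℚ).symm
  | smul c u ih => rw [Term.evalA, ih, ← Unitization.inr_smul]; rfl
  | add u v ihu ihv => rw [Term.evalA, ihu, ihv, ← Unitization.inr_add]; rfl
  | mul u v ihu ihv =>
    rw [Term.evalA, ihu, ihv, ← Unitization.inr_mul]
    congr 1
    exact Prod.ext rfl (evalA_subst_eq_evalRule ..).symm

theorem toMvPolynomial_pext_congr (D : X → Term X) {u v : Term X}
    (h : u.toMvPolynomial = v.toMvPolynomial) :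
    (pext P D u).toMvPolynomial = (pext P D v).toMvPolynomial := by
  have hjet := congrArg (MvPolynomial.aeval fun x => (Jet.mk (P := P) (MvPolynomial.X x)
    (D x).toMvPolynomial : Unitization ℚ (Jet P (MvPolynomial X ℚ)))) h
  rw [Term.aeval_toMvPolynomial, Term.aeval_toMvPolynomial, evalA_jet, evalA_jet] at hjet
  exact congrArg Prod.snd (Unitization.inr_injective hjet)

theorem toMvPolynomial_trWord_congr {A : Type} (𝒜 : PAutomaton A X) (w : List A)
    {u v : Term X} (h : u.toMvPolynomial = v.toMvPolynomial) :
    (trWord P 𝒜 w u).toMvPolynomial = (trWord P 𝒜 w v).toMvPolynomial := by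
  induction w generalizing u v with
  | nil => exact h
  | cons a w ih => exact ih (toMvPolynomial_pext_congr (𝒜.tr a) h)

end Extension

theorem semantic_invariance_general {A : Type} {X : Type}
    (P : Term (Fin 4)) (hP : Special P)
    (u v : Term X) (huv : TEq u v) (𝒜 : PAutomaton A X) :
    asem P 𝒜 u = asem P 𝒜 v := by
  have : Fact (Special P) := ⟨hP⟩
  funext w
  have hpoly := toMvPolynomial_trWord_congr (P := P) 𝒜 w huv.toMvPolynomial_eq
  simp only [asem, Term.evalQ_eq_evalA, ← Term.aeval_toMvPolynomial, hpoly]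

/-- **Semantic invariance.** For a special product rule `P`, equivalent terms have the
same semantics in every `P`-automaton. -/
theorem semantic_invariance {A : Type} [Fintype A] {X : Type}
    (P : Term (Fin 4)) (hP : Special P)
    (u v : Term X) (huv : TEq u v) (𝒜 : PAutomaton A X) :
    asem P 𝒜 u = asem P 𝒜 v :=
  semantic_invariance_general P hP u v huv 𝒜

end PSeries
end

section
/- Reversal-endomorphism characterisation: Let P be any product rule with P-product *. The reversal operation always satisfies (c·f)ᴿ = c·fᴿ and (f+g)ᴿ = fᴿ + gᴿ. Moreover, reversal is an endomorphism of the series algebra, i.e., additionally (f*g)ᴿ = fᴿ * gᴿ for all series f, g, if and only if right derivatives satisfy the same product rule as left derivatives: δᴿ_b(f*g) = P(f, δᴿ_b f, g, δᴿ_b g) for all series f, g and every b ∈ Σ. -/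
namespace PSeries

section RevAux

variable {A : Type}

lemma rev_rev' (f : Series A) : rev (rev f) = f := by
  funext w; simp [rev]

lemma rev_smul'' (c : ℚ) (f : Series A) : rev (c • f) = c • rev f := rfl

lemma rev_add'' (f g : Series A) : rev (f + g) = rev f + rev g := rfl

lemma deriv_rev' (b : A) (f : Series A) : deriv b (rev f) = rev (derivR b f) := by
  funext w; simp [deriv, rev, derivR]

lemma derivR_rev' (b : A) (f : Series A) : derivR b (rev f) = rev (deriv b f) := by
  funext w; simp [derivR, rev, deriv]

/-- If reversal commutes with `m` globally, it commutes with term evaluation. -/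
lemma evalS_rev' {X : Type} (m : Series A → Series A → Series A)
    (h : ∀ f g : Series A, rev (m f g) = m (rev f) (rev g)) (t : Term X)
    (ρ : X → Series A) :
    rev (t.evalS m ρ) = t.evalS m (fun x => rev (ρ x)) := by
  induction t with
  | var x => rfl
  | zero => rfl
  | smul c u ih => simp only [Term.evalS, rev_smul'', ih]
  | add u v ihu ihv => simp only [Term.evalS, rev_add'', ihu, ihv]
  | mul u v ihu ihv => simp only [Term.evalS, h, ihu, ihv]

/-- Pointwise congruence of term evaluation, given congruence of `m`. -/
lemma evalS_agree' {X : Type} (m : Series A → Series A → Series A) (n : ℕ)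
    (mc : ∀ f f' g g' : Series A,
      (∀ w, w.length ≤ n → f w = f' w) → (∀ w, w.length ≤ n → g w = g' w) →
      ∀ w, w.length ≤ n → m f g w = m f' g' w)
    (t : Term X) (ρ ρ' : X → Series A)
    (h : ∀ x w, w.length ≤ n → ρ x w = ρ' x w) :
    ∀ w, w.length ≤ n → t.evalS m ρ w = t.evalS m ρ' w := by
  induction t with
  | var x => exact h x
  | zero => intro w _; rfl
  | smul c u ih =>
      intro w hw
      simp only [Term.evalS, Pi.smul_apply]
      rw [ih w hw]
  | add u v ihu ihv =>
      intro w hw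
      simp only [Term.evalS, Pi.add_apply]
      rw [ihu w hw, ihv w hw]
  | mul u v ihu ihv => exact mc _ _ _ _ ihu ihv

/-- The `P`-product `m f g` at a word `w` depends only on `f`, `g` at words of
length at most `w.length`. -/
lemma m_agree' {P : Term (Fin 4)} (m : Series A → Series A → Series A)
    (hm : IsPProduct P m) :
    ∀ (n : ℕ) (f f' g g' : Series A),
      (∀ w, w.length ≤ n → f w = f' w) → (∀ w, w.length ≤ n → g w = g' w) →
      ∀ w, w.length ≤ n → m f g w = m f' g' w := by
  intro n
  induction n with
  | zero =>
      intro f f' g g' hf hg w hw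
      have hw0 : w = [] := List.length_eq_zero_iff.mp (Nat.le_zero.mp hw)
      subst hw0
      rw [hm.1, hm.1, hf [] (le_refl _), hg [] (le_refl _)]
  | succ n ih =>
      intro f f' g g' hf hg w hw
      match w with
      | [] => rw [hm.1, hm.1, hf [] (by simp), hg [] (by simp)]
      | a :: w' =>
          have hw' : w'.length ≤ n := by
            have := hw
            simp only [List.length_cons] at this
            omega
          have e1 : m f g (a :: w') = deriv a (m f g) w' := rfl
          have e2 : m f' g' (a :: w') = deriv a (m f' g') w' := rfl
          rw [e1, e2, hm.2, hm.2]
          refine evalS_agree' m n ih P _ _ ?_ w' hw'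
          intro x
          fin_cases x <;> intro u hu <;>
            simp only [Matrix.cons_val_zero, Matrix.cons_val_one, Matrix.head_cons,
              Matrix.cons_val_two, Matrix.tail_cons, Matrix.cons_val_three, deriv]
          · exact hf u (Nat.le_succ_of_le hu)
          · exact hf (a :: u) (by simpa using Nat.succ_le_succ hu)
          · exact hg u (Nat.le_succ_of_le hu)
          · exact hg (a :: u) (by simpa using Nat.succ_le_succ hu)

/-- Pointwise version of `evalS_rev'`, assuming reversal commutes with `m` only
at words of bounded length. -/
lemma evalS_rev_agree' {X : Type} (m : Series A → Series A → Series A) (n : ℕ)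
    (hrev : ∀ w, w.length ≤ n → ∀ f g : Series A, rev (m f g) w = m (rev f) (rev g) w)
    (mc : ∀ f f' g g' : Series A,
      (∀ w, w.length ≤ n → f w = f' w) → (∀ w, w.length ≤ n → g w = g' w) →
      ∀ w, w.length ≤ n → m f g w = m f' g' w)
    (t : Term X) (ρ : X → Series A) :
    ∀ w, w.length ≤ n → rev (t.evalS m ρ) w = t.evalS m (fun x => rev (ρ x)) w := by
  induction t with
  | var x => intro w _; rfl
  | zero => intro w _; rfl
  | smul c u ih =>
      intro w hw
      have := ih w hw
      simp only [rev, Term.evalS, Pi.smul_apply] at this ⊢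
      rw [this]
  | add u v ihu ihv =>
      intro w hw
      have h1 := ihu w hw
      have h2 := ihv w hw
      simp only [rev, Term.evalS, Pi.add_apply] at h1 h2 ⊢
      rw [h1, h2]
  | mul u v ihu ihv =>
      intro w hw
      simp only [Term.evalS]
      calc rev (m (u.evalS m ρ) (v.evalS m ρ)) w
          = m (rev (u.evalS m ρ)) (rev (v.evalS m ρ)) w := hrev w hw _ _
        _ = m (u.evalS m fun x => rev (ρ x)) (v.evalS m fun x => rev (ρ x)) w :=
            mc _ _ _ _ ihu ihv w hw

/-- Backward direction: the right-derivative rule implies reversal is multiplicative. -/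
lemma rev_mul_of_right_rule {P : Term (Fin 4)} (m : Series A → Series A → Series A)
    (hm : IsPProduct P m)
    (hR : ∀ (f g : Series A) (b : A),
      derivR b (m f g) = P.evalS m ![f, derivR b f, g, derivR b g]) :
    ∀ f g : Series A, rev (m f g) = m (rev f) (rev g) := by
  have key : ∀ (n : ℕ) (w : List A), w.length ≤ n → ∀ f g : Series A,
      rev (m f g) w = m (rev f) (rev g) w := by
    intro n
    induction n with
    | zero =>
        intro w hw f g
        have hw0 : w = [] := List.length_eq_zero_iff.mp (Nat.le_zero.mp hw)
        subst hw0
        show m f g [].reverse = m (rev f) (rev g) []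
        simp [hm.1, rev]
    | succ n ih =>
        intro w hw f g
        match w with
        | [] =>
            show m f g [].reverse = m (rev f) (rev g) []
            simp [hm.1, rev]
        | a :: w' =>
            have hw' : w'.length ≤ n := by
              simp only [List.length_cons] at hw; omega
            have e1 : rev (m f g) (a :: w')
                = (P.evalS m ![f, derivR a f, g, derivR a g]) w'.reverse := by
              show m f g ((a :: w').reverse) = _
              rw [List.reverse_cons]
              show derivR a (m f g) w'.reverse = _
              rw [hR]
            have e2 : m (rev f) (rev g) (a :: w')
                = (P.evalS m ![rev f, deriv a (rev f), rev g, deriv a (rev g)]) w' := by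
              show deriv a (m (rev f) (rev g)) w' = _
              rw [hm.2]
            rw [e1, e2]
            have e3 := evalS_rev_agree' m n (fun w hw f g => ih w hw f g)
              (m_agree' m hm n) P ![f, derivR a f, g, derivR a g] w' hw'
            have henv : (fun x => rev (![f, derivR a f, g, derivR a g] x))
                = ![rev f, deriv a (rev f), rev g, deriv a (rev g)] := by
              funext x
              fin_cases x <;> simp [deriv_rev']
            rw [henv] at e3
            exact e3
  intro f g
  funext w
  exact key w.length w (le_refl _) f g

end RevAux

/-- **Reversal-endomorphism characterisation.** Reversal is always linear; moreover it
commutes with the `P`-product iff right derivatives satisfy the same product rule as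
left derivatives. -/
theorem reversal_endomorphism_characterisation {A : Type} [Fintype A]
    (P : Term (Fin 4)) (m : Series A → Series A → Series A) (hm : IsPProduct P m) :
    (∀ (c : ℚ) (f : Series A), rev (c • f) = c • rev f) ∧
    (∀ f g : Series A, rev (f + g) = rev f + rev g) ∧
    ((∀ f g : Series A, rev (m f g) = m (rev f) (rev g)) ↔
      (∀ (f g : Series A) (b : A),
        derivR b (m f g) = P.evalS m ![f, derivR b f, g, derivR b g])) := by
  refine ⟨rev_smul'', rev_add'', ⟨?_, fun hR => rev_mul_of_right_rule m hm hR⟩⟩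
  intro h f g b
  have h2 : rev (m (rev f) (rev g)) = m f g := by rw [h, rev_rev', rev_rev']
  calc derivR b (m f g)
      = derivR b (rev (m (rev f) (rev g))) := by rw [h2]
    _ = rev (deriv b (m (rev f) (rev g))) := derivR_rev' b _
    _ = rev (P.evalS m ![rev f, deriv b (rev f), rev g, deriv b (rev g)]) := by rw [hm.2]
    _ = P.evalS m (fun x => rev (![rev f, deriv b (rev f), rev g, deriv b (rev g)] x)) :=
        evalS_rev' m h P _
    _ = P.evalS m ![f, derivR b f, g, derivR b g] := by
        have henv : (fun x => rev (![rev f, deriv b (rev f), rev g, deriv b (rev g)] x))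
            = ![f, derivR b f, g, derivR b g] := by
          funext x
          fin_cases x <;> simp [deriv_rev', rev_rev']
        rw [henv]

end PSeries
end

section
/- Closure of P-finite series under right derivatives: Let P be any product rule with P-product *, and suppose there exists a term Q over the variables x, ẋ, y, ẏ such that δᴿ_b(f*g) = Q(f, δᴿ_b f, g, δᴿ_b g) for all series f, g and all b ∈ Σ (semantics of Q with * interpreted by the P-product). Then for every P-finite series f and every letter b ∈ Σ, the right derivative δᴿ_b f is P-finite. -/
namespace PSeries

lemma InAlg.mono {A : Type} {m : Series A → Series A → Series A} {G G' : Set (Series A)}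
    (hGG : G ⊆ G') {f : Series A} (hf : InAlg m G f) : InAlg m G' f := by
  induction hf with
  | zero => exact .zero
  | gen h => exact .gen (hGG h)
  | smul c _ ih => exact ih.smul c
  | add _ _ ih1 ih2 => exact ih1.add ih2
  | mul _ _ ih1 ih2 => exact ih1.mul ih2

lemma evalS_mem {A X : Type} {m : Series A → Series A → Series A} {G : Set (Series A)}
    (u : Term X) (ρ : X → Series A) (h : ∀ x, InAlg m G (ρ x)) :
    InAlg m G (u.evalS m ρ) := by
  induction u with
  | var x => exact h x
  | zero => exact .zero
  | smul c u ih => exact ih.smul c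
  | add u v ih1 ih2 => exact ih1.add ih2
  | mul u v ih1 ih2 => exact ih1.mul ih2

lemma derivR_key {A : Type} {m : Series A → Series A → Series A} {Q : Term (Fin 4)}
    (hQ : ∀ (f g : Series A) (b : A),
      derivR b (m f g) = Q.evalS m ![f, derivR b f, g, derivR b g])
    (b : A) {G G' : Set (Series A)}
    (hG : ∀ g ∈ G, InAlg m G' g ∧ InAlg m G' (derivR b g))
    {f : Series A} (hf : InAlg m G f) :
    InAlg m G' f ∧ InAlg m G' (derivR b f) := by
  induction hf with
  | zero => exact ⟨.zero, .zero⟩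
  | gen h => exact hG _ h
  | smul c _ ih => exact ⟨ih.1.smul c, ih.2.smul c⟩
  | add _ _ ih1 ih2 => exact ⟨ih1.1.add ih2.1, ih1.2.add ih2.2⟩
  | mul _ _ ih1 ih2 =>
    refine ⟨ih1.1.mul ih2.1, ?_⟩
    rw [hQ]
    apply evalS_mem
    intro x
    fin_cases x <;> simp [ih1.1, ih1.2, ih2.1, ih2.2]

lemma deriv_derivR {A : Type} (a b : A) (f : Series A) :
    deriv a (derivR b f) = derivR b (deriv a f) := rfl

/-- **Closure of `P`-finite series under right derivatives.** If right derivatives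
satisfy some product rule `Q`, then `P`-finite series are closed under right
derivatives. -/
theorem pfinite_closed_derivR {A : Type} [Fintype A]
    (P : Term (Fin 4)) (m : Series A → Series A → Series A) (hm : IsPProduct P m)
    (Q : Term (Fin 4))
    (hQ : ∀ (f g : Series A) (b : A),
      derivR b (m f g) = Q.evalS m ![f, derivR b f, g, derivR b g])
    (f : Series A) (hf : PFinite m f) (b : A) :
    PFinite m (derivR b f) := by
  obtain ⟨k, g, hg0, hder⟩ := hf
  set g' : Fin (2 * k + 1 + 1) → Series A := fun i =>
    if h : (i : ℕ) < k + 1 then derivR b (g ⟨i, h⟩) else g ⟨(i : ℕ) - (k + 1), by omega⟩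
    with hg'
  have hgen : ∀ i : Fin (k + 1), g i ∈ Set.range g' ∧ derivR b (g i) ∈ Set.range g' := by
    intro i
    constructor
    · refine ⟨⟨(k + 1) + i, by omega⟩, ?_⟩
      have : ¬ ((k + 1) + (i : ℕ) < k + 1) := by omega
      simp only [hg', this, dif_neg, not_false_iff]
      exact congrArg g (Fin.ext (by simp only [] ; omega))
    · refine ⟨⟨i, by omega⟩, ?_⟩
      have : (i : ℕ) < k + 1 := i.2
      simp only [hg', this, dif_pos]
  have hG : ∀ h ∈ Set.range g, InAlg m (Set.range g') h ∧
      InAlg m (Set.range g') (derivR b h) := by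
    rintro _ ⟨i, rfl⟩
    exact ⟨.gen (hgen i).1, .gen (hgen i).2⟩
  refine ⟨2 * k + 1, g', ?_, ?_⟩
  · show g' 0 = derivR b f
    have h0 : ((0 : Fin (2 * k + 1 + 1)) : ℕ) = 0 := rfl
    simp only [hg', h0, Nat.zero_lt_succ, dif_pos]
    rw [show (⟨0, Nat.zero_lt_succ k⟩ : Fin (k + 1)) = 0 from rfl, hg0]
  · intro i a
    by_cases h : (i : ℕ) < k + 1
    · have : g' i = derivR b (g ⟨i, h⟩) := by simp only [hg', h, dif_pos]
      rw [this, deriv_derivR]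
      exact (derivR_key hQ b hG (hder ⟨i, h⟩ a)).2
    · have : g' i = g ⟨(i : ℕ) - (k + 1), by omega⟩ := by simp only [hg', h, dif_neg, not_false_iff]
      rw [this]
      exact (derivR_key hQ b hG (hder _ a)).1

end PSeries
end

section
/- Reversal is an endomorphism for special products: Let P be a special product rule with P-product *. Then reversal is an endomorphism of the series ℚ-algebra: (c·f)ᴿ = c·fᴿ, (f+g)ᴿ = fᴿ + gᴿ, and (f*g)ᴿ = fᴿ * gᴿ for all series f, g and all c ∈ ℚ. Consequently, for every P-finite series f and every b ∈ Σ, the right derivative δᴿ_b f is P-finite. -/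
namespace PSeries

namespace RevAux
open Term

theorem evalQ_sound {X : Type} {u v : Term X} (h : TEq u v) (F : X → ℚ) :
    u.evalQ F = v.evalQ F := by
  induction h with
  | refl u => rfl
  | symm _ ih => exact ih.symm
  | trans _ _ ih1 ih2 => exact ih1.trans ih2
  | smul_congr c _ ih => simp only [Term.evalQ, ih]
  | add_congr _ _ ih1 ih2 => simp only [Term.evalQ, ih1, ih2]
  | mul_congr _ _ ih1 ih2 => simp only [Term.evalQ, ih1, ih2]
  | one_smul u => simp only [Term.evalQ]; ring
  | smul_smul c d u => simp only [Term.evalQ]; ring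
  | add_smul c d u => simp only [Term.evalQ]; ring
  | smul_add c u v => simp only [Term.evalQ]; ring
  | add_zero u => simp only [Term.evalQ]; ring
  | add_assoc u v w => simp only [Term.evalQ]; ring
  | add_comm u v => simp only [Term.evalQ]; ring
  | neg_cancel u => simp only [Term.evalQ]; ring
  | mul_addl u v w => simp only [Term.evalQ]; ring
  | mul_smull c u v => simp only [Term.evalQ]; ring
  | mul_assoc u v w => simp only [Term.evalQ]; ring
  | mul_comm u v => simp only [Term.evalQ]; ring

theorem evalQ_subst {X Y : Type} (t : Term X) (σ : X → Term Y) (F : Y → ℚ) :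
    (t.subst σ).evalQ F = t.evalQ fun x => (σ x).evalQ F := by
  induction t <;> simp_all only [Term.subst, Term.evalQ]

theorem evalP_eval {X : Type} (t : Term X) (φ : X → Polynomial ℚ) (r : ℚ) :
    Polynomial.eval r (Term.evalA t φ) = Term.evalQ t (fun x => Polynomial.eval r (φ x)) := by
  induction t with
  | var x => rfl
  | zero => simp [Term.evalA, Term.evalQ]
  | smul c u ih => simp [Term.evalA, Term.evalQ, ih, Polynomial.eval_smul, smul_eq_mul]
  | add u v ih1 ih2 => simp [Term.evalA, Term.evalQ, ih1, ih2]
  | mul u v ih1 ih2 => simp [Term.evalA, Term.evalQ, ih1, ih2]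

/-- additive polynomial functions on ℚ are linear -/
theorem poly_additive_linear (q : Polynomial ℚ)
    (h : ∀ s t : ℚ, q.eval (s + t) = q.eval s + q.eval t) (t : ℚ) :
    q.eval t = t * q.eval 1 := by
  have h0 : q.eval 0 = 0 := by have h00 := h 0 0; rw [add_zero] at h00; linarith
  have hn : ∀ n : ℕ, q.eval (n : ℚ) = (n : ℚ) * q.eval 1 := by
    intro n; induction n with
    | zero => simpa using h0
    | succ k ih => push_cast; rw [h k 1, ih]; ring
  have hzero : q - Polynomial.C (q.eval 1) * Polynomial.X = 0 := by
    apply Polynomial.eq_zero_of_infinite_isRoot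
    apply Set.Infinite.mono (s := Set.range ((↑·) : ℕ → ℚ))
    · rintro x ⟨n, rfl⟩
      simp only [Set.mem_setOf_eq, Polynomial.IsRoot.def, Polynomial.eval_sub,
        Polynomial.eval_mul, Polynomial.eval_C, Polynomial.eval_X, hn n]
      ring
    · exact Set.infinite_range_of_injective (fun a b hab => by exact_mod_cast hab)
  have h2 := congrArg (Polynomial.eval t) hzero
  simp only [Polynomial.eval_sub, Polynomial.eval_mul, Polynomial.eval_C, Polynomial.eval_X,
    Polynomial.eval_zero] at h2
  linarith
set_option maxRecDepth 4000

theorem normal_form (P : Term (Fin 4)) (hP : Special P) :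
    ∃ a b d : ℚ, b * b = b + a * d ∧
      ∀ v : Fin 4 → ℚ, Term.evalQ P v
        = a * (v 0 * v 2) + b * (v 0 * v 3) + b * (v 1 * v 2) + d * (v 1 * v 3) := by
  obtain ⟨hadd, hassoc, hcomm⟩ := hP
  set Fv : ℚ → ℚ → ℚ → ℚ → ℚ := fun x y z w => Term.evalQ P ![x, y, z, w] with hFv
  -- additivity
  have hAdd : ∀ x x' y y' z w : ℚ, Fv (x + x') (y + y') z w = Fv x y z w + Fv x' y' z w := by
    intro x x' y y' z w
    have h := evalQ_sound hadd ![x, y, x', y', z, w]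
    rw [evalQ_subst] at h
    simp only [Term.evalQ] at h
    rw [evalQ_subst, evalQ_subst] at h
    have e1 : (fun i => Term.evalQ
        ((![.add (.var 0) (.var 2), .add (.var 1) (.var 3), .var 4, .var 5] :
          Fin 4 → Term (Fin 6)) i) ![x, y, x', y', z, w]) = ![x + x', y + y', z, w] := by
      funext i; fin_cases i <;> rfl
    have e2 : (fun i => Term.evalQ
        ((![.var 0, .var 1, .var 4, .var 5] : Fin 4 → Term (Fin 6)) i)
          ![x, y, x', y', z, w]) = ![x, y, z, w] := by
      funext i; fin_cases i <;> rfl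
    have e3 : (fun i => Term.evalQ
        ((![.var 2, .var 3, .var 4, .var 5] : Fin 4 → Term (Fin 6)) i)
          ![x, y, x', y', z, w]) = ![x', y', z, w] := by
      funext i; fin_cases i <;> rfl
    rw [e1, e2, e3] at h
    exact h
  -- symmetry
  have hComm : ∀ x y z w : ℚ, Fv x y z w = Fv z w x y := by
    intro x y z w
    have h := evalQ_sound hcomm ![x, y, z, w]
    rw [evalQ_subst] at h
    have e1 : (fun i => Term.evalQ
        ((![.var 2, .var 3, .var 0, .var 1] : Fin 4 → Term (Fin 4)) i) ![x, y, z, w])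
        = ![z, w, x, y] := by
      funext i; fin_cases i <;> rfl
    rw [e1] at h
    exact h
  -- homogeneity
  have hHom : ∀ (t x y z w : ℚ), Fv (t * x) (t * y) z w = t * Fv x y z w := by
    intro t x y z w
    set Q : Polynomial ℚ :=
      Term.evalA P ![Polynomial.C x * Polynomial.X, Polynomial.C y * Polynomial.X,
        Polynomial.C z, Polynomial.C w] with hQ
    have hev : ∀ s : ℚ, Q.eval s = Fv (s * x) (s * y) z w := by
      intro s
      rw [hQ, evalP_eval]
      have e1 : (fun i => Polynomial.eval s
          ((![Polynomial.C x * Polynomial.X, Polynomial.C y * Polynomial.X,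
            Polynomial.C z, Polynomial.C w]) i)) = ![s * x, s * y, z, w] := by
        funext i
        fin_cases i
        · show Polynomial.eval s (Polynomial.C x * Polynomial.X) = s * x
          rw [Polynomial.eval_mul, Polynomial.eval_C, Polynomial.eval_X, mul_comm]
        · show Polynomial.eval s (Polynomial.C y * Polynomial.X) = s * y
          rw [Polynomial.eval_mul, Polynomial.eval_C, Polynomial.eval_X, mul_comm]
        · exact Polynomial.eval_C
        · exact Polynomial.eval_C
      rw [e1]
    have hq : ∀ s t' : ℚ, Q.eval (s + t') = Q.eval s + Q.eval t' := by
      intro s t'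
      rw [hev, hev, hev, show (s + t') * x = s * x + t' * x by ring,
        show (s + t') * y = s * y + t' * y by ring]
      exact hAdd _ _ _ _ _ _
    have h := poly_additive_linear Q hq t
    rw [hev, hev, one_mul, one_mul] at h
    exact h
  -- decomposition
  have hNF : ∀ x y z w : ℚ, Fv x y z w
      = (Fv 1 0 1 0) * (x * z) + (Fv 1 0 0 1) * (x * w)
        + (Fv 1 0 0 1) * (y * z) + (Fv 0 1 0 1) * (y * w) := by
    intro x y z w
    have e0 : Fv x y z w = x * Fv 1 0 z w + y * Fv 0 1 z w := by
      have h1 := hAdd (x * 1) (y * 0) (x * 0) (y * 1) z w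
      rw [show x * 1 + y * 0 = x by ring, show x * 0 + y * 1 = y by ring] at h1
      rw [h1, hHom x 1 0 z w, hHom y 0 1 z w]
    have e1 : Fv 1 0 z w = z * Fv 1 0 1 0 + w * Fv 0 1 1 0 := by
      rw [hComm 1 0 z w]
      have h1 := hAdd (z * 1) (w * 0) (z * 0) (w * 1) 1 0
      rw [show z * 1 + w * 0 = z by ring, show z * 0 + w * 1 = w by ring] at h1
      rw [h1, hHom z 1 0 1 0, hHom w 0 1 1 0]
    have e2 : Fv 0 1 z w = z * Fv 1 0 0 1 + w * Fv 0 1 0 1 := by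
      rw [hComm 0 1 z w]
      have h1 := hAdd (z * 1) (w * 0) (z * 0) (w * 1) 0 1
      rw [show z * 1 + w * 0 = z by ring, show z * 0 + w * 1 = w by ring] at h1
      rw [h1, hHom z 1 0 0 1, hHom w 0 1 0 1]
    have e3 : Fv 0 1 1 0 = Fv 1 0 0 1 := hComm 0 1 1 0
    rw [e0, e1, e2, e3]; ring
  refine ⟨Fv 1 0 1 0, Fv 1 0 0 1, Fv 0 1 0 1, ?_, ?_⟩
  · -- associativity constraint  b² = b + a d
    have h := evalQ_sound hassoc ![1, 0, 1, 0, 0, 1]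
    rw [evalQ_subst, evalQ_subst] at h
    have e1 : (fun i => Term.evalQ
        ((![.var 0, .var 1, .mul (.var 2) (.var 4),
          P.subst (![.var 2, .var 3, .var 4, .var 5] : Fin 4 → Term (Fin 6))] :
          Fin 4 → Term (Fin 6)) i) ![1, 0, 1, 0, 0, 1]) = ![1, 0, 1 * 0, Fv 1 0 0 1] := by
      funext i
      fin_cases i
      · rfl
      · rfl
      · rfl
      · show Term.evalQ (P.subst (![.var 2, .var 3, .var 4, .var 5] : Fin 4 → Term (Fin 6)))
          ![1, 0, 1, 0, 0, 1] = Fv 1 0 0 1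
        rw [evalQ_subst]
        have : (fun i => Term.evalQ
            ((![.var 2, .var 3, .var 4, .var 5] : Fin 4 → Term (Fin 6)) i)
            ![1, 0, 1, 0, 0, 1]) = ![(1:ℚ), 0, 0, 1] := by
          funext i; fin_cases i <;> rfl
        rw [this]
    have e2 : (fun i => Term.evalQ
        ((![.mul (.var 0) (.var 2),
          P.subst (![.var 0, .var 1, .var 2, .var 3] : Fin 4 → Term (Fin 6)), .var 4, .var 5] :
          Fin 4 → Term (Fin 6)) i) ![1, 0, 1, 0, 0, 1]) = ![1 * 1, Fv 1 0 1 0, 0, 1] := by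
      funext i
      fin_cases i
      · rfl
      · show Term.evalQ (P.subst (![.var 0, .var 1, .var 2, .var 3] : Fin 4 → Term (Fin 6)))
          ![1, 0, 1, 0, 0, 1] = Fv 1 0 1 0
        rw [evalQ_subst]
        have : (fun i => Term.evalQ
            ((![.var 0, .var 1, .var 2, .var 3] : Fin 4 → Term (Fin 6)) i)
            ![1, 0, 1, 0, 0, 1]) = ![(1:ℚ), 0, 1, 0] := by
          funext i; fin_cases i <;> rfl
        rw [this]
      · rfl
      · rfl
    rw [e1, e2] at h
    have hL := hNF 1 0 (1 * 0) (Fv 1 0 0 1)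
    have hR := hNF (1 * 1) (Fv 1 0 1 0) 0 1
    show Fv 1 0 0 1 * Fv 1 0 0 1 = Fv 1 0 0 1 + Fv 1 0 1 0 * Fv 0 1 0 1
    have hh : Fv 1 0 (1 * 0) (Fv 1 0 0 1) = Fv (1 * 1) (Fv 1 0 1 0) 0 1 := h
    rw [hL, hR] at hh
    ring_nf at hh ⊢
    linarith [hh]
  · intro v
    have hv : ![v 0, v 1, v 2, v 3] = v := by
      funext i; fin_cases i <;> rfl
    have h := hNF (v 0) (v 1) (v 2) (v 3)
    simp only [hFv] at h ⊢
    rw [hv] at h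
    rw [h]
section MM
variable {A : Type}

/-- The explicit bilinear product recursion. -/
def mm (a b d : ℚ) : List A → Series A → Series A → ℚ
  | [], f, g => f [] * g []
  | c :: w, f, g =>
      a * mm a b d w f g + b * mm a b d w f (deriv c g) + b * mm a b d w (deriv c f) g
        + d * mm a b d w (deriv c f) (deriv c g)

/-- The explicit product as a binary operation on series. -/
def M (a b d : ℚ) (f g : Series A) : Series A := fun w => mm a b d w f g

variable (a b d : ℚ)

lemma deriv_add (c : A) (f g : Series A) : deriv c (f + g) = deriv c f + deriv c g := rfl
lemma deriv_smul (c : A) (q : ℚ) (f : Series A) : deriv c (q • f) = q • deriv c f := rfl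
lemma deriv_zero (c : A) : deriv c (0 : Series A) = 0 := rfl
lemma deriv_derivR (c ℓ : A) (f : Series A) :
    deriv c (derivR ℓ f) = derivR ℓ (deriv c f) := rfl
lemma rev_derivR (c : A) (g : Series A) : rev (derivR c g) = deriv c (rev g) := by
  funext w; simp [rev, derivR, deriv, List.reverse_cons]

lemma mm_add_left : ∀ (w : List A) (f f' g : Series A),
    mm a b d w (f + f') g = mm a b d w f g + mm a b d w f' g := by
  intro w
  induction w with
  | nil => intro f f' g; simp only [mm, Pi.add_apply]; ring
  | cons c w ih => intro f f' g; simp only [mm, deriv_add, ih]; ring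

lemma mm_smul_left : ∀ (w : List A) (q : ℚ) (f g : Series A),
    mm a b d w (q • f) g = q * mm a b d w f g := by
  intro w
  induction w with
  | nil => intro q f g; simp only [mm, Pi.smul_apply, smul_eq_mul]; ring
  | cons c w ih => intro q f g; simp only [mm, deriv_smul, ih]; ring

lemma mm_comm : ∀ (w : List A) (f g : Series A), mm a b d w f g = mm a b d w g f := by
  intro w
  induction w with
  | nil => intro f g; simp only [mm]; ring
  | cons c w ih => intro f g; simp only [mm]; rw [ih f g, ih f (deriv c g), ih (deriv c f) g, ih (deriv c f) (deriv c g)]; ring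

lemma mm_add_right (w : List A) (f g g' : Series A) :
    mm a b d w f (g + g') = mm a b d w f g + mm a b d w f g' := by
  rw [mm_comm, mm_add_left, mm_comm a b d w g f, mm_comm a b d w g' f]

lemma mm_smul_right (w : List A) (q : ℚ) (f g : Series A) :
    mm a b d w f (q • g) = q * mm a b d w f g := by
  rw [mm_comm, mm_smul_left, mm_comm a b d w g f]

lemma mm_zero_left : ∀ (w : List A) (g : Series A), mm a b d w (0 : Series A) g = 0 := by
  intro w
  induction w with
  | nil => intro g; simp [mm]
  | cons c w ih => intro g; simp [mm, deriv_zero, ih]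

lemma mm_zero_right (w : List A) (f : Series A) : mm a b d w f (0 : Series A) = 0 := by
  rw [mm_comm, mm_zero_left]

lemma deriv_M (c : A) (f g : Series A) :
    deriv c (M a b d f g) = a • M a b d f g + b • M a b d f (deriv c g)
      + b • M a b d (deriv c f) g + d • M a b d (deriv c f) (deriv c g) := by
  funext w
  show mm a b d (c :: w) f g = _
  simp only [mm, Pi.add_apply, Pi.smul_apply, smul_eq_mul, M]

lemma mm_assoc (hb : b * b = b + a * d) : ∀ (w : List A) (f g h : Series A),
    mm a b d w (M a b d f g) h = mm a b d w f (M a b d g h) := by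
  intro w
  induction w with
  | nil =>
    intro f g h
    show (M a b d f g) [] * h [] = f [] * (M a b d g h) []
    show (f [] * g []) * h [] = f [] * (g [] * h [])
    ring
  | cons c w ih =>
    intro f g h
    simp only [mm, deriv_M, mm_add_left, mm_add_right, mm_smul_left, mm_smul_right, ih]
    linear_combination
      (mm a b d w (deriv c f) (M a b d g h) - mm a b d w f (M a b d g (deriv c h))) * hb

lemma mm_rd (ℓ : A) : ∀ (w : List A) (f g : Series A),
    derivR ℓ (M a b d f g) w
      = a * mm a b d w f g + b * mm a b d w f (derivR ℓ g)
        + b * mm a b d w (derivR ℓ f) g + d * mm a b d w (derivR ℓ f) (derivR ℓ g) := by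
  intro w
  induction w with
  | nil =>
    intro f g
    show mm a b d ([ℓ]) f g = _
    simp only [mm, deriv, derivR]
    norm_num
  | cons c w ih =>
    intro f g
    show mm a b d (c :: (w ++ [ℓ])) f g = _
    have key : ∀ F G : Series A, mm a b d (w ++ [ℓ]) F G = derivR ℓ (M a b d F G) w :=
      fun F G => rfl
    simp only [mm, key, ih, deriv_derivR]
    ring

lemma mm_rev : ∀ (w : List A) (f g : Series A),
    mm a b d w.reverse f g = mm a b d w (rev f) (rev g) := by
  intro w
  induction w with
  | nil => intro f g; rfl
  | cons c w ih =>
    intro f g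
    rw [List.reverse_cons]
    have key : mm a b d (w.reverse ++ [c]) f g = derivR c (M a b d f g) w.reverse := rfl
    rw [key, mm_rd, ih, ih, ih, ih]
    show _ = mm a b d (c :: w) (rev f) (rev g)
    simp only [mm, rev_derivR]

lemma mm_local : ∀ (w : List A) (f f' g g' : Series A),
    (∀ v : List A, v.length ≤ w.length → f v = f' v) →
    (∀ v : List A, v.length ≤ w.length → g v = g' v) →
    mm a b d w f g = mm a b d w f' g' := by
  intro w
  induction w with
  | nil =>
    intro f f' g g' hf hg
    simp only [mm, hf [] (by simp), hg [] (by simp)]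
  | cons c w ih =>
    intro f f' g g' hf hg
    have hf0 : ∀ v : List A, v.length ≤ w.length → f v = f' v :=
      fun v hv => hf v (hv.trans (Nat.le_succ _))
    have hg0 : ∀ v : List A, v.length ≤ w.length → g v = g' v :=
      fun v hv => hg v (hv.trans (Nat.le_succ _))
    have hf1 : ∀ v : List A, v.length ≤ w.length → deriv c f v = deriv c f' v :=
      fun v hv => hf (c :: v) (by simpa using Nat.succ_le_succ hv)
    have hg1 : ∀ v : List A, v.length ≤ w.length → deriv c g v = deriv c g' v :=
      fun v hv => hg (c :: v) (by simpa using Nat.succ_le_succ hv)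
    simp only [mm, ih f f' g g' hf0 hg0, ih f f' _ _ hf0 hg1, ih _ _ g g' hf1 hg0,
      ih _ _ _ _ hf1 hg1]

end MM
section WAlg

/-- Wrapper for series carrying the `M a b d` multiplication. -/
structure W (A : Type) (a b d : ℚ) (hb : b * b = b + a * d) : Type where
  mk' ::
  toS : Series A

namespace W

variable {A : Type} {a b d : ℚ} {hb : b * b = b + a * d}

instance : Zero (W A a b d hb) := ⟨⟨0⟩⟩
instance : Add (W A a b d hb) := ⟨fun x y => ⟨x.toS + y.toS⟩⟩
instance : Neg (W A a b d hb) := ⟨fun x => ⟨-x.toS⟩⟩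
instance : Sub (W A a b d hb) := ⟨fun x y => ⟨x.toS - y.toS⟩⟩
instance : SMul ℕ (W A a b d hb) := ⟨fun n x => ⟨n • x.toS⟩⟩
instance : SMul ℤ (W A a b d hb) := ⟨fun n x => ⟨n • x.toS⟩⟩
instance : SMul ℚ (W A a b d hb) := ⟨fun c x => ⟨c • x.toS⟩⟩
instance : Mul (W A a b d hb) := ⟨fun x y => ⟨M a b d x.toS y.toS⟩⟩

lemma toS_injective : Function.Injective (toS : W A a b d hb → Series A) :=
  fun x y h => by cases x; cases y; cases h; rfl

instance : AddCommGroup (W A a b d hb) :=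
  Function.Injective.addCommGroup toS toS_injective rfl (fun _ _ => rfl) (fun _ => rfl)
    (fun _ _ => rfl) (fun _ _ => rfl) (fun _ _ => rfl)

/-- `toS` as an additive homomorphism. -/
def toSHom : W A a b d hb →+ Series A :=
  { toFun := toS, map_zero' := rfl, map_add' := fun _ _ => rfl }

instance : Module ℚ (W A a b d hb) :=
  Function.Injective.module ℚ toSHom toS_injective (fun _ _ => rfl)

instance : NonUnitalCommRing (W A a b d hb) :=
  { (inferInstance : AddCommGroup (W A a b d hb)) with
    mul := (· * ·)
    left_distrib := by
      intro x y z; apply toS_injective; funext w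
      exact mm_add_right a b d w x.toS y.toS z.toS
    right_distrib := by
      intro x y z; apply toS_injective; funext w
      exact mm_add_left a b d w x.toS y.toS z.toS
    zero_mul := by
      intro x; apply toS_injective; funext w
      exact mm_zero_left a b d w x.toS
    mul_zero := by
      intro x; apply toS_injective; funext w
      exact mm_zero_right a b d w x.toS
    mul_assoc := by
      intro x y z; apply toS_injective; funext w
      exact mm_assoc a b d hb w x.toS y.toS z.toS
    mul_comm := by
      intro x y; apply toS_injective; funext w
      exact mm_comm a b d w x.toS y.toS }

instance : SMulCommClass ℚ (W A a b d hb) (W A a b d hb) :=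
  ⟨fun c x y => by
    apply toS_injective; funext w
    show c * mm a b d w x.toS y.toS = mm a b d w x.toS (c • y.toS)
    exact (mm_smul_right a b d w c x.toS y.toS).symm⟩

instance : IsScalarTower ℚ (W A a b d hb) (W A a b d hb) :=
  ⟨fun c x y => by
    apply toS_injective; funext w
    show mm a b d w (c • x.toS) y.toS = c * mm a b d w x.toS y.toS
    exact mm_smul_left a b d w c x.toS y.toS⟩

end W

variable {A : Type} {a b d : ℚ}

/-- Evaluation of terms in the unitization of `W` computes `evalS` of `M`. -/
lemma evalA_unitization (hb : b * b = b + a * d) {X : Type} (t : Term X) (ρ : X → Series A) :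
    Term.evalA t (fun x => (Unitization.inr (⟨ρ x⟩ : W A a b d hb) : Unitization ℚ (W A a b d hb)))
      = Unitization.inr (⟨Term.evalS (M a b d) t ρ⟩ : W A a b d hb) := by
  induction t with
  | var x => rfl
  | zero =>
    show (0 : Unitization ℚ (W A a b d hb)) = Unitization.inr (⟨(0 : Series A)⟩ : W A a b d hb)
    exact (Unitization.inr_zero ℚ).symm
  | smul c u ih =>
    show c • Term.evalA u _ = _
    rw [ih, ← Unitization.inr_smul]
    rfl
  | add u v ih1 ih2 =>
    show Term.evalA u _ + Term.evalA v _ = _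
    rw [ih1, ih2, ← Unitization.inr_add]
    rfl
  | mul u v ih1 ih2 =>
    show Term.evalA u _ * Term.evalA v _ = _
    rw [ih1, ih2, ← Unitization.inr_mul]
    rfl

/-- evaluating the polynomial of a term at rationals gives `evalQ`. -/
lemma evalMv_evalQ {X : Type} (t : Term X) (v : X → ℚ) :
    MvPolynomial.eval v (Term.evalA t (MvPolynomial.X : X → MvPolynomial X ℚ))
      = Term.evalQ t v := by
  induction t with
  | var x => simp [Term.evalA, Term.evalQ]
  | zero => simp [Term.evalA, Term.evalQ]
  | smul c u ih => simp [Term.evalA, Term.evalQ, MvPolynomial.smul_eq_C_mul, ih]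
  | add u v ih1 ih2 => simp [Term.evalA, Term.evalQ, ih1, ih2]
  | mul u v ih1 ih2 => simp [Term.evalA, Term.evalQ, ih1, ih2]

/-- `evalA` factors through the polynomial of the term. -/
lemma evalA_aeval {X : Type} {R : Type} [CommRing R] [Algebra ℚ R] (t : Term X) (ρ : X → R) :
    Term.evalA t ρ
      = MvPolynomial.aeval ρ (Term.evalA t (MvPolynomial.X : X → MvPolynomial X ℚ)) := by
  induction t with
  | var x => simp [Term.evalA]
  | zero => simp [Term.evalA]
  | smul c u ih => simp only [Term.evalA, ih, map_smul]
  | add u v ih1 ih2 => simp only [Term.evalA, ih1, ih2, map_add]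
  | mul u v ih1 ih2 => simp only [Term.evalA, ih1, ih2, map_mul]

/-- The normal form of `Pnf`. -/
def Pnf (a b d : ℚ) : Term (Fin 4) :=
  .add (.add (.add (.smul a (.mul (.var 0) (.var 2))) (.smul b (.mul (.var 0) (.var 3))))
    (.smul b (.mul (.var 1) (.var 2)))) (.smul d (.mul (.var 1) (.var 3)))

lemma evalS_M_eq (P : Term (Fin 4)) (hb : b * b = b + a * d)
    (hNF : ∀ v : Fin 4 → ℚ, Term.evalQ P v
      = a * (v 0 * v 2) + b * (v 0 * v 3) + b * (v 1 * v 2) + d * (v 1 * v 3))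
    (ρ : Fin 4 → Series A) :
    Term.evalS (M a b d) P ρ = fun w =>
      a * mm a b d w (ρ 0) (ρ 2) + b * mm a b d w (ρ 0) (ρ 3)
        + b * mm a b d w (ρ 1) (ρ 2) + d * mm a b d w (ρ 1) (ρ 3) := by
  have hpoly : Term.evalA P (MvPolynomial.X : Fin 4 → MvPolynomial (Fin 4) ℚ)
      = Term.evalA (Pnf a b d) (MvPolynomial.X : Fin 4 → MvPolynomial (Fin 4) ℚ) := by
    apply MvPolynomial.funext
    intro v
    rw [evalMv_evalQ, evalMv_evalQ, hNF]
    simp only [Pnf, Term.evalQ]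
  have h1 : Term.evalS (M a b d) P ρ = Term.evalS (M a b d) (Pnf a b d) ρ := by
    have h2 := evalA_unitization hb P ρ
    have h3 := evalA_unitization hb (Pnf a b d) ρ
    rw [evalA_aeval P, hpoly, ← evalA_aeval (Pnf a b d), h3] at h2
    have h4 := Unitization.inr_injective h2
    exact (congrArg W.toS h4).symm
  rw [h1]
  funext w
  show (_ + _ : Series A) w = _
  simp only [Term.evalS, Pnf, Pi.add_apply, Pi.smul_apply, smul_eq_mul, M]
section Main
variable {A : Type} {a b d : ℚ}

lemma evalS_switch (m : Series A → Series A → Series A) {X : Type} (t : Term X)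
    (ρ : X → Series A) :
    ∀ (w : List A),
      (∀ (F G : Series A) (v : List A), v.length ≤ w.length → m F G v = M a b d F G v) →
      Term.evalS m t ρ w = Term.evalS (M a b d) t ρ w := by
  induction t with
  | var x => intro w h; rfl
  | zero => intro w h; rfl
  | smul c u ih =>
    intro w h
    show (c • Term.evalS m u ρ) w = (c • Term.evalS (M a b d) u ρ) w
    simp only [Pi.smul_apply, smul_eq_mul, ih w h]
  | add u v ih1 ih2 =>
    intro w h
    show (Term.evalS m u ρ + Term.evalS m v ρ) w = _
    show Term.evalS m u ρ w + Term.evalS m v ρ w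
      = Term.evalS (M a b d) u ρ w + Term.evalS (M a b d) v ρ w
    rw [ih1 w h, ih2 w h]
  | mul u v ih1 ih2 =>
    intro w h
    show m (Term.evalS m u ρ) (Term.evalS m v ρ) w
      = M a b d (Term.evalS (M a b d) u ρ) (Term.evalS (M a b d) v ρ) w
    rw [h _ _ w le_rfl]
    exact mm_local a b d w _ _ _ _
      (fun v' hv' => ih1 v' (fun F G v'' hv'' => h F G v'' (hv''.trans hv')))
      (fun v' hv' => ih2 v' (fun F G v'' hv'' => h F G v'' (hv''.trans hv')))

lemma m_eq_M (P : Term (Fin 4)) (m : Series A → Series A → Series A)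
    (hm : IsPProduct P m) (hb : b * b = b + a * d)
    (hNF : ∀ v : Fin 4 → ℚ, Term.evalQ P v
      = a * (v 0 * v 2) + b * (v 0 * v 3) + b * (v 1 * v 2) + d * (v 1 * v 3)) :
    m = M a b d := by
  have main : ∀ (n : ℕ) (f g : Series A) (w : List A), w.length ≤ n →
      m f g w = M a b d f g w := by
    intro n
    induction n with
    | zero =>
      intro f g w hw
      have hwnil : w = [] := List.eq_nil_of_length_eq_zero (Nat.le_zero.mp hw)
      subst hwnil
      exact hm.1 f g
    | succ n ih =>
      intro f g w hw
      match w with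
      | [] => exact hm.1 f g
      | c :: w' =>
        have hw' : w'.length ≤ n := by simpa using hw
        have h1 : m f g (c :: w') = deriv c (m f g) w' := rfl
        rw [h1, hm.2 f g c]
        rw [evalS_switch m P ![f, deriv c f, g, deriv c g] w'
          (fun F G v hv => ih F G v (hv.trans hw'))]
        rw [congrFun (evalS_M_eq P hb hNF ![f, deriv c f, g, deriv c g]) w']
        show a * mm a b d w' f g + b * mm a b d w' f (deriv c g)
            + b * mm a b d w' (deriv c f) g + d * mm a b d w' (deriv c f) (deriv c g)
          = mm a b d (c :: w') f g
        simp only [mm]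
  funext f g w
  exact main w.length f g w le_rfl

lemma M_rd (ℓ : A) (f g : Series A) :
    derivR ℓ (M a b d f g)
      = a • M a b d f g + b • M a b d f (derivR ℓ g)
        + b • M a b d (derivR ℓ f) g + d • M a b d (derivR ℓ f) (derivR ℓ g) := by
  funext w
  rw [show derivR ℓ (M a b d f g) w = derivR ℓ (M a b d f g) w from rfl, mm_rd a b d ℓ w f g]
  simp only [Pi.add_apply, Pi.smul_apply, smul_eq_mul]
  rfl

lemma InAlg_mono {m : Series A → Series A → Series A} {G G' : Set (Series A)}
    (hGG : G ⊆ G') {f : Series A} (h : InAlg m G f) : InAlg m G' f := by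
  induction h with
  | zero => exact .zero
  | gen hg => exact .gen (hGG hg)
  | smul c _ ih => exact .smul c ih
  | add _ _ ih1 ih2 => exact .add ih1 ih2
  | mul _ _ ih1 ih2 => exact .mul ih1 ih2

lemma InAlg_rd (ℓ : A) (G G' : Set (Series A))
    (hG : ∀ x ∈ G, InAlg (M a b d) G' x)
    (hGd : ∀ x ∈ G, InAlg (M a b d) G' (derivR ℓ x)) :
    ∀ {f : Series A}, InAlg (M a b d) G f →
      InAlg (M a b d) G' f ∧ InAlg (M a b d) G' (derivR ℓ f) := by
  intro f h
  induction h with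
  | zero =>
    refine ⟨.zero, ?_⟩
    rw [show derivR ℓ (0 : Series A) = 0 from rfl]
    exact .zero
  | gen hx => exact ⟨hG _ hx, hGd _ hx⟩
  | @smul c f' _ ih =>
    refine ⟨.smul c ih.1, ?_⟩
    rw [show derivR ℓ (c • f') = c • derivR ℓ f' from rfl]
    exact .smul c ih.2
  | @add f' g' _ _ ih1 ih2 =>
    refine ⟨.add ih1.1 ih2.1, ?_⟩
    rw [show derivR ℓ (f' + g') = derivR ℓ f' + derivR ℓ g' from rfl]
    exact .add ih1.2 ih2.2
  | @mul f' g' _ _ ih1 ih2 =>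
    refine ⟨.mul ih1.1 ih2.1, ?_⟩
    rw [M_rd]
    exact .add (.add (.add (.smul a (.mul ih1.1 ih2.1)) (.smul b (.mul ih1.1 ih2.2)))
      (.smul b (.mul ih1.2 ih2.1))) (.smul d (.mul ih1.2 ih2.2))

lemma pfinite_rd (ℓ : A) (f : Series A) (hf : PFinite (M a b d) f) :
    PFinite (M a b d) (derivR ℓ f) := by
  obtain ⟨k, g, hg0, hg⟩ := hf
  refine ⟨2 * k + 1, fun j => if hj : (j : ℕ) ≤ k
    then derivR ℓ (g ⟨(j : ℕ), Nat.lt_succ_of_le hj⟩)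
    else g ⟨(j : ℕ) - (k + 1), by have := j.isLt; omega⟩, ?_, ?_⟩
  · dsimp only
    rw [dif_pos (show ((0 : Fin (2 * k + 1 + 1)) : ℕ) ≤ k by simp)]
    apply congrArg (derivR ℓ)
    rw [← hg0]
    exact congrArg g (Fin.ext (by simp))
  · set h : Fin (2 * k + 1 + 1) → Series A := fun j => if hj : (j : ℕ) ≤ k
      then derivR ℓ (g ⟨(j : ℕ), Nat.lt_succ_of_le hj⟩)
      else g ⟨(j : ℕ) - (k + 1), by have := j.isLt; omega⟩ with hh
    have hmem1 : ∀ i : Fin (k + 1), g i ∈ Set.range h := by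
      intro i
      refine ⟨⟨(i : ℕ) + (k + 1), by have := i.isLt; omega⟩, ?_⟩
      rw [hh]
      dsimp only
      have : ¬ (((⟨(i : ℕ) + (k + 1), by have := i.isLt; omega⟩ : Fin (2 * k + 1 + 1)) : ℕ) ≤ k) := by
        simp only [Fin.val_mk]; omega
      rw [dif_neg this]
      exact congrArg g (Fin.ext (by simp only [Fin.val_mk]; omega))
    have hmem2 : ∀ i : Fin (k + 1), derivR ℓ (g i) ∈ Set.range h := by
      intro i
      refine ⟨⟨(i : ℕ), by have := i.isLt; omega⟩, ?_⟩
      rw [hh]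
      dsimp only
      have hle : ((⟨(i : ℕ), by have := i.isLt; omega⟩ : Fin (2 * k + 1 + 1)) : ℕ) ≤ k := by
        simp only [Fin.val_mk]; exact Nat.lt_succ_iff.mp i.isLt
      rw [dif_pos hle]
    have hG : ∀ x ∈ Set.range g, InAlg (M a b d) (Set.range h) x := by
      rintro x ⟨i, rfl⟩; exact .gen (hmem1 i)
    have hGd : ∀ x ∈ Set.range g, InAlg (M a b d) (Set.range h) (derivR ℓ x) := by
      rintro x ⟨i, rfl⟩; exact .gen (hmem2 i)
    intro j c
    by_cases hj : (j : ℕ) ≤ k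
    · have hhj : h j = derivR ℓ (g ⟨(j : ℕ), Nat.lt_succ_of_le hj⟩) := by
        rw [hh]; exact dif_pos hj
      rw [hhj, show deriv c (derivR ℓ (g ⟨(j : ℕ), Nat.lt_succ_of_le hj⟩))
        = derivR ℓ (deriv c (g ⟨(j : ℕ), Nat.lt_succ_of_le hj⟩)) from rfl]
      exact (InAlg_rd ℓ (Set.range g) (Set.range h) hG hGd (hg _ c)).2
    · have hhj : h j = g ⟨(j : ℕ) - (k + 1), by have := j.isLt; omega⟩ := by
        rw [hh]; exact dif_neg hj
      rw [hhj]
      exact InAlg_mono (fun x hx => by obtain ⟨i, rfl⟩ := hx; exact (hmem1 i)) (hg _ c)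

end Main
end WAlg
end RevAux
/-- **Reversal is an endomorphism for special products.** For a special product rule `P`,
reversal is an endomorphism of the series `ℚ`-algebra; consequently `P`-finite series
are closed under right derivatives. -/
theorem reversal_endomorphism_special {A : Type} [Fintype A]
    (P : Term (Fin 4)) (hP : Special P)
    (m : Series A → Series A → Series A) (hm : IsPProduct P m) :
    ((∀ (c : ℚ) (f : Series A), rev (c • f) = c • rev f) ∧
     (∀ f g : Series A, rev (f + g) = rev f + rev g) ∧
     (∀ f g : Series A, rev (m f g) = m (rev f) (rev g))) ∧
    (∀ (f : Series A) (b : A), PFinite m f → PFinite m (derivR b f)) := by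
  obtain ⟨a, b, d, hb, hNF⟩ := RevAux.normal_form P hP
  have hmM : m = RevAux.M a b d := RevAux.m_eq_M P m hm hb hNF
  subst hmM
  refine ⟨⟨fun c f => rfl, fun f g => rfl, fun f g => ?_⟩,
    fun f ℓ hf => RevAux.pfinite_rd ℓ f hf⟩
  funext w
  exact RevAux.mm_rev a b d w f g

end PSeries
end
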